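/- (Within-group direct decodability.) For any integers t ∈ {0,...,K} and r ∈ {1,...,N}, in each step j of the proposed interference-alignment scheme, for each admissible set J (J ⊆ {1,...,K}\{u_1,...,u_{j−1}}, |J| = t+1, u_j ∈ J) and each group G^j_{J,B}, every user in J can recover, from the n^j_{J,B} transmitted linear combinations for that group together with its cached sub-blocks and the sub-blocks it has decoded previously by direct decoding, every sub-block appearing in those linear combinations that it has neither cached nor decoded previously. -/
import Mathlib


open Finset

/-- The ambient GF(2)-vector space with basis indexed by sub-block labels `(S, V)`:
`S` is the block index (a set of files) and `V` the set of users caching the sub-block. -/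
abbrev Vec (N K : ℕ) := Finset (Fin N) × Finset (Fin K) → ZMod 2

/-- The basis vector corresponding to the sub-block `W_{S,V}`. -/
def subBlk (N K : ℕ) (S : Finset (Fin N)) (V : Finset (Fin K)) : Vec N K :=
  Pi.single (S, V) 1

/-- Number of distinct entries `N_e(d)` of a demand vector. -/
def numDistinct {N K : ℕ} (d : Fin K → Fin N) : ℕ := (Finset.univ.image d).card

/-- The demands `{d_{u_1},…,d_{u_j}}` of the first `j` leaders. -/
def leaderDems {N K : ℕ} (d : Fin K → Fin N) (u : ℕ → Fin K) (j : ℕ) : Finset (Fin N) :=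
  (Finset.Icc 1 j).image (fun i => d (u i))

/-- The group `G^j_{J,B}` of blocks: blocks `S` of size `r` intersecting the demands of `J`,
containing at most one of the first `j` leader demands (i.e. containing no 2-subset of
them), and with `S \ d(J) = B`. -/
def groupG {N K : ℕ} (d : Fin K → Fin N) (u : ℕ → Fin K) (r j : ℕ)
    (J : Finset (Fin K)) (B : Finset (Fin N)) : Finset (Finset (Fin N)) :=
  (Finset.powersetCard r (Finset.univ : Finset (Fin N))).filter (fun S =>
    (S ∩ J.image d).Nonempty ∧ (S ∩ leaderDems d u j).card ≤ 1 ∧ S \ J.image d = B)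

/-- The multicast term `⊕_{k∈J : d_k∈S} W_{S,J\{k}}` of a block `S` for the user set `J`. -/
def blkTerm {N K : ℕ} (d : Fin K → Fin N) (J : Finset (Fin K)) (S : Finset (Fin N)) : Vec N K :=
  ∑ k ∈ J.filter (fun k => d k ∈ S), subBlk N K S (J.erase k)

/-- The transmitted linear combination of the group `G^j_{J,B}` whose pilot block
(one of the first `n^j_{J,B}` blocks, demanded by the leader `u_j`) is `P`: the `p`-th
coordinate of the vector of linear combinations in the scheme, where `S_p = P`. -/
def comb {N K : ℕ} (d : Fin K → Fin N) (u : ℕ → Fin K) (r j : ℕ)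
    (J : Finset (Fin K)) (B : Finset (Fin N)) (P : Finset (Fin N)) : Vec N K :=
  blkTerm d J P +
    ∑ S ∈ (groupG d u r j J B).filter (fun S => d (u j) ∉ S ∧ (S ∩ P).card = r - 1),
      blkTerm d J S

/-- `Sum(G^j_{J,B})`: the XOR of all linear combinations transmitted for the group
`G^j_{J,B}` (one per block of the group demanded by the leader `u_j`). -/
def sumG {N K : ℕ} (d : Fin K → Fin N) (u : ℕ → Fin K) (r j : ℕ)
    (J : Finset (Fin K)) (B : Finset (Fin N)) : Vec N K :=
  ∑ P ∈ (groupG d u r j J B).filter (fun S => d (u j) ∈ S), comb d u r j J B P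

/-- The set of all linear combinations transmitted by the interference-alignment scheme
during steps `1,…,jmax`. -/
def transmitted {N K : ℕ} (d : Fin K → Fin N) (u : ℕ → Fin K) (r t jmax : ℕ) :
    Set (Vec N K) :=
  { v | ∃ j ∈ Finset.Icc 1 jmax, ∃ J : Finset (Fin K),
      J.card = t + 1 ∧ u j ∈ J ∧ (∀ i ∈ Finset.Icc 1 (j - 1), u i ∉ J) ∧
      ∃ B : Finset (Fin N), ∃ P ∈ groupG d u r j J B,
        d (u j) ∈ P ∧ v = comb d u r j J B P }

/-- The sub-blocks cached by user `k` under the MAN placement with parameter `t`. -/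
def cacheSet (N K r t : ℕ) (k : Fin K) : Set (Vec N K) :=
  { v | ∃ S : Finset (Fin N), ∃ V : Finset (Fin K),
      S.card = r ∧ V.card = t ∧ k ∈ V ∧ v = subBlk N K S V }

/-- A linear combination `c` contains no interference to a user demanding file `dk`,
relative to a set `Dec` of already known sub-blocks: every sub-block appearing in `c`
either belongs to the demanded file or is already known (hence cancellable). -/
def interfFree {N K : ℕ} (dk : Fin N) (Dec : Set (Vec N K)) (c : Vec N K) : Prop :=
  ∀ S V, c (S, V) ≠ 0 → dk ∈ S ∨ subBlk N K S V ∈ Dec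

/-- One round of direct decoding: add every sub-block lying in the span of the known
sub-blocks together with the interference-free transmitted combinations. -/
def ddStep {N K : ℕ} (dk : Fin N) (T : Set (Vec N K)) (Dec : Set (Vec N K)) :
    Set (Vec N K) :=
  Dec ∪ { v | (∃ S V, v = subBlk N K S V) ∧
    v ∈ Submodule.span (ZMod 2) (Dec ∪ { c ∈ T | interfFree dk Dec c }) }

/-- The set of sub-blocks that user `k` can obtain by direct decoding (treating
interference as noise) from its cache and the transmissions of steps `1,…,jmax`. -/
def directDec {N K : ℕ} (d : Fin K → Fin N) (u : ℕ → Fin K) (r t : ℕ)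
    (k : Fin K) (jmax : ℕ) : Set (Vec N K) :=
  ⋃ m : ℕ, (ddStep (d k) (transmitted d u r t jmax))^[m] (cacheSet N K r t k)

/-- The combination `C_{T,H}` from the interference-alignment analysis. -/
def Cth {N K : ℕ} (d : Fin K → Fin N) (r : ℕ) (T : Finset (Fin K)) (H : Finset (Fin N)) :
    Vec N K :=
  ∑ k1 ∈ T, ∑ S' ∈ (Finset.powersetCard r (T.image d ∪ H)).filter
      (fun S' => H ⊆ S' ∧ d k1 ∈ S'), subBlk N K S' (T.erase k1)

section Infra

variable {N K : ℕ}

lemma erase_eq_erase {J : Finset (Fin K)} {k1 k2 : Fin K} (h1 : k1 ∈ J) (h2 : k2 ∈ J)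
    (h : J.erase k1 = J.erase k2) : k1 = k2 := by
  by_contra hne
  have : k1 ∈ J.erase k2 := Finset.mem_erase.mpr ⟨hne, h1⟩
  rw [← h] at this
  exact (Finset.mem_erase.mp this).1 rfl

lemma subBlk_apply (S : Finset (Fin N)) (V : Finset (Fin K)) (p : Finset (Fin N) × Finset (Fin K)) :
    subBlk N K S V p = if p = (S, V) then 1 else 0 := by
  simp [subBlk, Pi.single_apply]

lemma blkTerm_apply_of_ne (d : Fin K → Fin N) (J : Finset (Fin K)) {X S : Finset (Fin N)}
    (V : Finset (Fin K)) (h : S ≠ X) : blkTerm d J X (S, V) = 0 := by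
  rw [blkTerm, Finset.sum_apply]
  refine Finset.sum_eq_zero (fun k1 _ => ?_)
  rw [subBlk_apply]
  simp [Prod.ext_iff, h]

lemma blkTerm_apply_ne_zero {d : Fin K → Fin N} {J : Finset (Fin K)} {X S : Finset (Fin N)}
    {V : Finset (Fin K)} (h : blkTerm d J X (S, V) ≠ 0) :
    S = X ∧ ∃ k1 ∈ J, d k1 ∈ X ∧ J.erase k1 = V := by
  rw [blkTerm, Finset.sum_apply] at h
  obtain ⟨k1, hk1, hne⟩ := Finset.exists_ne_zero_of_sum_ne_zero h
  rw [subBlk_apply] at hne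
  have : (S, V) = (X, J.erase k1) := by by_contra hc; simp [hc] at hne
  rw [Prod.ext_iff] at this
  obtain ⟨hSX, hV⟩ := this
  refine ⟨hSX, k1, (Finset.mem_filter.mp hk1).1, (Finset.mem_filter.mp hk1).2, hV.symm⟩

lemma blkTerm_apply_self {d : Fin K → Fin N} {J : Finset (Fin K)} {X : Finset (Fin N)}
    {k : Fin K} (hk : k ∈ J) (hd : d k ∈ X) : blkTerm d J X (X, J.erase k) = 1 := by
  rw [blkTerm, Finset.sum_apply]
  rw [Finset.sum_eq_single_of_mem k (Finset.mem_filter.mpr ⟨hk, hd⟩)]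
  · simp [subBlk_apply]
  · intro k1 hk1 hne
    rw [subBlk_apply]
    have : J.erase k ≠ J.erase k1 := fun h =>
      hne (erase_eq_erase (Finset.mem_filter.mp hk1).1 hk h.symm)
    simp [Prod.ext_iff, this]

end Infra
section Comb

variable {N K : ℕ} {d : Fin K → Fin N} {u : ℕ → Fin K} {r j : ℕ}
  {J : Finset (Fin K)} {B : Finset (Fin N)} {P : Finset (Fin N)}

/-- the aligned filter -/
abbrev alignedF (d : Fin K → Fin N) (u : ℕ → Fin K) (r j : ℕ)
    (J : Finset (Fin K)) (B : Finset (Fin N)) (P : Finset (Fin N)) : Finset (Finset (Fin N)) :=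
  (groupG d u r j J B).filter (fun S => d (u j) ∉ S ∧ (S ∩ P).card = r - 1)

lemma comb_apply_ne_zero {S : Finset (Fin N)} {V : Finset (Fin K)}
    (h : comb d u r j J B P (S, V) ≠ 0) :
    (S = P ∨ S ∈ alignedF d u r j J B P) ∧ ∃ k1 ∈ J, d k1 ∈ S ∧ J.erase k1 = V := by
  rw [comb] at h
  have h' : blkTerm d J P (S, V) ≠ 0 ∨
      (∑ X ∈ alignedF d u r j J B P, blkTerm d J X) (S, V) ≠ 0 := by
    by_contra hc
    push_neg at hc
    exact h (by rw [Pi.add_apply, hc.1, hc.2, add_zero])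
  rcases h' with h' | h'
  · obtain ⟨hSP, hex⟩ := blkTerm_apply_ne_zero h'
    exact ⟨Or.inl hSP, by rwa [← hSP] at hex⟩
  · rw [Finset.sum_apply] at h'
    obtain ⟨X, hX, hne⟩ := Finset.exists_ne_zero_of_sum_ne_zero h'
    obtain ⟨hSX, hex⟩ := blkTerm_apply_ne_zero hne
    subst hSX
    exact ⟨Or.inr hX, hex⟩

lemma comb_apply_target {S : Finset (Fin N)} {k : Fin K}
    (hP : d (u j) ∈ P) (hS : S = P ∨ S ∈ alignedF d u r j J B P)
    (hk : k ∈ J) (hd : d k ∈ S) : comb d u r j J B P (S, J.erase k) ≠ 0 := by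
  have hPnota : P ∉ alignedF d u r j J B P := by
    intro h
    exact ((Finset.mem_filter.mp h).2.1 hP)
  rw [comb, Pi.add_apply, Finset.sum_apply]
  rcases hS with rfl | hS
  · have hz : ∀ X ∈ alignedF d u r j J B S, blkTerm d J X (S, J.erase k) = 0 := by
      intro X hX
      refine blkTerm_apply_of_ne d J _ (fun hSX => hPnota ?_)
      rw [← hSX] at hX; exact hX
    rw [blkTerm_apply_self hk hd, Finset.sum_eq_zero hz]
    simp
  · have hSP : S ≠ P := fun h => hPnota (h ▸ hS)
    rw [blkTerm_apply_of_ne d J _ hSP]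
    rw [Finset.sum_eq_single_of_mem S hS
      (fun X hX hne => blkTerm_apply_of_ne d J _ (Ne.symm hne))]
    rw [blkTerm_apply_self hk hd]
    simp

end Comb
section SpanDec

variable {N K : ℕ}

lemma key_extract_span (M : Submodule (ZMod 2) (Vec N K)) (c : Vec N K) (hc : c ∈ M)
    (S : Finset (Fin N)) (V : Finset (Fin K)) (h0 : c (S, V) ≠ 0)
    (hoth : ∀ p : Finset (Fin N) × Finset (Fin K), p ≠ (S, V) → c p ≠ 0 →
      subBlk N K p.1 p.2 ∈ M) : subBlk N K S V ∈ M := by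
  classical
  have hrepr : (∑ p : Finset (Fin N) × Finset (Fin K), c p • subBlk N K p.1 p.2) = c := by
    funext x
    rw [Finset.sum_apply]
    have hterm : ∀ p : Finset (Fin N) × Finset (Fin K),
        (c p • subBlk N K p.1 p.2) x = if x = p then c p else 0 := by
      intro p
      rw [Pi.smul_apply, subBlk_apply, smul_eq_mul]
      by_cases h : x = (p.1, p.2) <;> simp [h]
    rw [Finset.sum_congr rfl (fun p _ => hterm p)]
    rw [Finset.sum_ite_eq (Finset.univ) x (fun p => c p)]
    simp
  have hone : ∀ x : ZMod 2, x ≠ 0 → x = 1 := by decide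
  have hc1 : c (S, V) = 1 := hone _ h0
  have hsplit := Finset.add_sum_erase Finset.univ
    (fun p : Finset (Fin N) × Finset (Fin K) => c p • subBlk N K p.1 p.2)
    (Finset.mem_univ (S, V))
  rw [hrepr] at hsplit
  simp only [] at hsplit
  rw [show c ((S, V).1, (S, V).2) = (1 : ZMod 2) from hc1, one_smul] at hsplit
  have hsplit : subBlk N K S V +
      ∑ p ∈ Finset.univ.erase (S, V), c p • subBlk N K p.1 p.2 = c := hsplit
  have hsum : (∑ p ∈ Finset.univ.erase (S, V), c p • subBlk N K p.1 p.2) ∈ M := by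
    refine Submodule.sum_mem M (fun p hp => ?_)
    by_cases hz : c p = 0
    · rw [hz, zero_smul]; exact Submodule.zero_mem M
    · exact Submodule.smul_mem M _ (hoth p (Finset.mem_erase.mp hp).1 hz)
  have heq : subBlk N K S V = c - ∑ p ∈ Finset.univ.erase (S, V), c p • subBlk N K p.1 p.2 :=
    eq_sub_of_add_eq hsplit
  rw [heq]
  exact Submodule.sub_mem M hc hsum

lemma ddStep_subset (dk : Fin N) (T Dec : Set (Vec N K)) : Dec ⊆ ddStep dk T Dec :=
  Set.subset_union_left

lemma interfFree_mono {dk : Fin N} {Dec Dec' : Set (Vec N K)} (h : Dec ⊆ Dec') {c : Vec N K}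
    (hc : interfFree dk Dec c) : interfFree dk Dec' c :=
  fun S V hne => (hc S V hne).imp id (fun hx => h hx)

lemma ddStep_mono {dk : Fin N} {T T' Dec Dec' : Set (Vec N K)} (hT : T ⊆ T') (hD : Dec ⊆ Dec') :
    ddStep dk T Dec ⊆ ddStep dk T' Dec' := by
  refine Set.union_subset_union hD ?_
  intro v ⟨hv1, hv2⟩
  refine ⟨hv1, Submodule.span_mono ?_ hv2⟩
  refine Set.union_subset_union hD ?_
  intro c ⟨hcT, hcIF⟩
  exact ⟨hT hcT, interfFree_mono hD hcIF⟩

lemma iter_mono_m {dk : Fin N} {T : Set (Vec N K)} {C : Set (Vec N K)} {m m' : ℕ} (h : m ≤ m') :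
    (ddStep dk T)^[m] C ⊆ (ddStep dk T)^[m'] C := by
  induction m' with
  | zero => rw [Nat.le_zero.mp h]
  | succ n ih =>
    rcases Nat.lt_or_ge m (n+1) with h' | h'
    · rw [Function.iterate_succ_apply']
      exact (ih (Nat.lt_succ_iff.mp h')).trans (ddStep_subset dk T _)
    · rw [Nat.le_antisymm h h']

lemma iter_mono_T {dk : Fin N} {T T' : Set (Vec N K)} {C : Set (Vec N K)} (hT : T ⊆ T') (m : ℕ) :
    (ddStep dk T)^[m] C ⊆ (ddStep dk T')^[m] C := by
  induction m with
  | zero => exact subset_rfl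
  | succ n ih =>
    rw [Function.iterate_succ_apply', Function.iterate_succ_apply']
    exact ddStep_mono hT ih

lemma transmitted_mono {d : Fin K → Fin N} {u : ℕ → Fin K} {r t : ℕ} {i i' : ℕ} (h : i ≤ i') :
    transmitted d u r t i ⊆ transmitted d u r t i' := by
  rintro v ⟨j, hj, rest⟩
  rw [Finset.mem_Icc] at hj
  exact ⟨j, Finset.mem_Icc.mpr ⟨hj.1, hj.2.trans h⟩, rest⟩

lemma directDec_mono {d : Fin K → Fin N} {u : ℕ → Fin K} {r t : ℕ} {k : Fin K} {i i' : ℕ}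
    (h : i ≤ i') : directDec d u r t k i ⊆ directDec d u r t k i' := by
  refine Set.iUnion_mono (fun m => ?_)
  exact iter_mono_T (transmitted_mono h) m

lemma cacheSet_subset_directDec {d : Fin K → Fin N} {u : ℕ → Fin K} {r t : ℕ} {k : Fin K}
    {i : ℕ} : cacheSet N K r t k ⊆ directDec d u r t k i := by
  intro v hv
  exact Set.mem_iUnion.mpr ⟨0, hv⟩

lemma extract_dec {d : Fin K → Fin N} {u : ℕ → Fin K} {r t : ℕ} (k : Fin K) (i : ℕ)
    (c : Vec N K) (hc : c ∈ transmitted d u r t i)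
    (S : Finset (Fin N)) (V : Finset (Fin K)) (hfS : d k ∈ S) (h0 : c (S, V) ≠ 0)
    (hoth : ∀ p : Finset (Fin N) × Finset (Fin K), p ≠ (S, V) → c p ≠ 0 →
      subBlk N K p.1 p.2 ∈ directDec d u r t k i) :
    subBlk N K S V ∈ directDec d u r t k i := by
  classical
  set F := ddStep (d k) (transmitted d u r t i) with hF
  set C := cacheSet N K r t k with hC
  let Pset : Finset (Finset (Fin N) × Finset (Fin K)) :=
    Finset.univ.filter (fun p => p ≠ (S, V) ∧ c p ≠ 0)
  have hex : ∀ p ∈ Pset, ∃ m : ℕ, subBlk N K p.1 p.2 ∈ F^[m] C := by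
    intro p hp
    rw [Finset.mem_filter] at hp
    exact Set.mem_iUnion.mp (hoth p hp.2.1 hp.2.2)
  choose! g hg using hex
  set M : ℕ := Pset.sup g with hM
  have hall : ∀ p ∈ Pset, subBlk N K p.1 p.2 ∈ F^[M] C := by
    intro p hp
    exact iter_mono_m (Finset.le_sup hp) (hg p hp)
  have hIF : interfFree (d k) (F^[M] C) c := by
    intro S' V' hne
    by_cases hp : (S', V') = (S, V)
    · exact Or.inl (by rw [show S' = S from congrArg Prod.fst hp]; exact hfS)
    · exact Or.inr (hall (S', V') (Finset.mem_filter.mpr ⟨Finset.mem_univ _, hp, hne⟩))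
  have hmem : subBlk N K S V ∈ F^[M+1] C := by
    rw [Function.iterate_succ_apply']
    refine Set.mem_union_right _ ⟨⟨S, V, rfl⟩, ?_⟩
    have hcm : c ∈ (F^[M] C ∪
        {c' ∈ transmitted d u r t i | interfFree (d k) (F^[M] C) c'} : Set (Vec N K)) :=
      Set.mem_union_right _ ⟨hc, hIF⟩
    refine key_extract_span _ c (Submodule.subset_span hcm) S V h0 (fun p hp hne => ?_)
    exact Submodule.subset_span (Set.mem_union_left _
      (hall p (Finset.mem_filter.mpr ⟨Finset.mem_univ _, hp, hne⟩)))
  exact Set.mem_iUnion.mpr ⟨M+1, hmem⟩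

end SpanDec
section Groups

variable {N K r t j : ℕ} {d : Fin K → Fin N} {u : ℕ → Fin K}
  {J : Finset (Fin K)} {B : Finset (Fin N)}

lemma mem_groupG {S : Finset (Fin N)} : S ∈ groupG d u r j J B ↔
    S.card = r ∧ (S ∩ J.image d).Nonempty ∧ (S ∩ leaderDems d u j).card ≤ 1 ∧
      S \ J.image d = B := by
  simp [groupG, Finset.mem_filter, Finset.mem_powersetCard, and_assoc]

lemma groupG_card {S : Finset (Fin N)} (h : S ∈ groupG d u r j J B) : S.card = r :=
  (mem_groupG.mp h).1

lemma mem_leaderDems {y : Fin N} {i : ℕ} :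
    y ∈ leaderDems d u i ↔ ∃ i', (1 ≤ i' ∧ i' ≤ i) ∧ d (u i') = y := by
  simp [leaderDems, Finset.mem_image, Finset.mem_Icc]

lemma leaderDems_mono {i i' : ℕ} (h : i ≤ i') : leaderDems d u i ⊆ leaderDems d u i' :=
  Finset.image_subset_image (Finset.Icc_subset_Icc_right h)

lemma self_mem_leaderDems {i : ℕ} (hi : 1 ≤ i) : d (u i) ∈ leaderDems d u i :=
  mem_leaderDems.mpr ⟨i, ⟨hi, le_rfl⟩, rfl⟩

lemma cached_mem {k : Fin K} {i : ℕ} {S : Finset (Fin N)} {V : Finset (Fin K)}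
    (hS : S.card = r) (hV : V.card = t) (hk : k ∈ V) :
    subBlk N K S V ∈ directDec d u r t k i :=
  cacheSet_subset_directDec ⟨S, V, hS, hV, hk, rfl⟩

end Groups

section A1sec

variable {N K r t : ℕ} {d : Fin K → Fin N} {u : ℕ → Fin K}

lemma A1 {k : Fin K} {i : ℕ} (hi1 : 1 ≤ i)
    {J : Finset (Fin K)} (hJc : J.card = t + 1) (hJu : u i ∈ J)
    (hJav : ∀ i' ∈ Finset.Icc 1 (i-1), u i' ∉ J) (hk : k ∈ J)
    {T : Finset (Fin N)} (hTr : T.card = r) (hfT : d k ∈ T) (hzT : d (u i) ∉ T)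
    (hTL : T ∩ leaderDems d u i ⊆ {d k}) :
    subBlk N K T (J.erase k) ∈ directDec d u r t k i := by
  classical
  set P' := insert (d (u i)) (T.erase (d k)) with hP'
  have hzTe : d (u i) ∉ T.erase (d k) := fun h => hzT (Finset.mem_of_mem_erase h)
  have hrpos : 1 ≤ r := hTr ▸ Finset.card_pos.mpr ⟨d k, hfT⟩
  have hP'card : P'.card = r := by
    rw [hP', Finset.card_insert_of_notMem hzTe, Finset.card_erase_of_mem hfT, hTr]
    omega
  have hduiIm : d (u i) ∈ J.image d := Finset.mem_image_of_mem d hJu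
  have hdkIm : d k ∈ J.image d := Finset.mem_image_of_mem d hk
  have hsd : T \ J.image d = P' \ J.image d := by
    ext x
    simp only [Finset.mem_sdiff, hP', Finset.mem_insert, Finset.mem_erase]
    constructor
    · rintro ⟨hxT, hxim⟩
      exact ⟨Or.inr ⟨fun h => hxim (h ▸ hdkIm), hxT⟩, hxim⟩
    · rintro ⟨h1, hxim⟩
      rcases h1 with rfl | ⟨-, hxT⟩
      · exact absurd hduiIm hxim
      · exact ⟨hxT, hxim⟩
  set Bs := P' \ J.image d with hBs
  have hP'L : P' ∩ leaderDems d u i ⊆ {d (u i)} := by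
    intro x hx
    rw [Finset.mem_inter] at hx
    rcases Finset.mem_insert.mp hx.1 with rfl | hxe
    · exact Finset.mem_singleton_self _
    · obtain ⟨hxdk, hxT⟩ := Finset.mem_erase.mp hxe
      have hmem : x ∈ T ∩ leaderDems d u i := Finset.mem_inter.mpr ⟨hxT, hx.2⟩
      exact absurd (Finset.mem_singleton.mp (hTL hmem)) hxdk
  have hP'g : P' ∈ groupG d u r i J Bs :=
    mem_groupG.mpr ⟨hP'card, ⟨d (u i), Finset.mem_inter.mpr ⟨Finset.mem_insert_self _ _, hduiIm⟩⟩,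
      (Finset.card_le_card hP'L).trans (by simp), rfl⟩
  have hTg : T ∈ groupG d u r i J Bs :=
    mem_groupG.mpr ⟨hTr, ⟨d k, Finset.mem_inter.mpr ⟨hfT, hdkIm⟩⟩,
      (Finset.card_le_card hTL).trans (by simp), hsd⟩
  have hTP'int : T ∩ P' = T.erase (d k) := by
    ext x
    simp only [Finset.mem_inter, hP', Finset.mem_insert, Finset.mem_erase]
    constructor
    · rintro ⟨hxT, h⟩
      rcases h with rfl | h
      · exact absurd hxT hzT
      · exact h
    · rintro ⟨hxdk, hxT⟩
      exact ⟨hxT, Or.inr ⟨hxdk, hxT⟩⟩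
  have hTfil : T ∈ alignedF d u r i J Bs P' :=
    Finset.mem_filter.mpr ⟨hTg, hzT, by rw [hTP'int, Finset.card_erase_of_mem hfT, hTr]⟩
  have hcomb : comb d u r i J Bs P' ∈ transmitted d u r t i :=
    ⟨i, Finset.mem_Icc.mpr ⟨hi1, le_rfl⟩, J, hJc, hJu, hJav, Bs, P', hP'g,
      Finset.mem_insert_self _ _, rfl⟩
  have h0 : comb d u r i J Bs P' (T, J.erase k) ≠ 0 :=
    comb_apply_target (Finset.mem_insert_self _ _) (Or.inr hTfil) hk hfT
  refine extract_dec k i _ hcomb T (J.erase k) hfT h0 ?_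
  rintro ⟨X, Vp⟩ hp hne
  obtain ⟨hX, k1, hk1J, hdk1, hVk1⟩ := comb_apply_ne_zero hne
  by_cases hk1k : k1 = k
  · rw [hk1k] at hdk1 hVk1
    exfalso
    rcases hX with rfl | hXfil
    · rcases Finset.mem_insert.mp hdk1 with h | h
      · exact hzT (h ▸ hfT)
      · exact (Finset.mem_erase.mp h).1 rfl
    · obtain ⟨hXg, hzX, hXPcard⟩ := Finset.mem_filter.mp hXfil
      have hXcard : X.card = r := groupG_card hXg
      have hsub : X ∩ P' ⊆ P'.erase (d (u i)) := by
        intro x hx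
        rw [Finset.mem_inter] at hx
        exact Finset.mem_erase.mpr ⟨fun h => hzX (h ▸ hx.1), hx.2⟩
      have hPe : P'.erase (d (u i)) = T.erase (d k) := Finset.erase_insert hzTe
      have hcards : (P'.erase (d (u i))).card = r - 1 := by
        rw [hPe, Finset.card_erase_of_mem hfT, hTr]
      have hXP : X ∩ P' = P'.erase (d (u i)) :=
        Finset.eq_of_subset_of_card_le hsub (by rw [hcards, hXPcard])
      have hTsub : T ⊆ X := by
        intro x hxT
        by_cases hxdk : x = d k
        · exact hxdk ▸ hdk1
        · have : x ∈ X ∩ P' := by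
            rw [hXP, hPe]
            exact Finset.mem_erase.mpr ⟨hxdk, hxT⟩
          exact (Finset.mem_inter.mp this).1
      have hTX : T = X := Finset.eq_of_subset_of_card_le hTsub (by rw [hXcard, hTr])
      exact hp (by rw [← hTX, ← hVk1])
  · have hkV : k ∈ J.erase k1 := Finset.mem_erase.mpr ⟨fun h => hk1k h.symm, hk⟩
    have hXr : X.card = r := by
      rcases hX with rfl | hXfil
      · exact hP'card
      · exact groupG_card (Finset.mem_filter.mp hXfil).1
    have hVt : (J.erase k1).card = t := by
      rw [Finset.card_erase_of_mem hk1J, hJc]; omega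
    rw [← hVk1]
    exact cached_mem hXr hVt hkV

end A1sec
section MainInd

variable {N K r t : ℕ} {d : Fin K → Fin N} {u : ℕ → Fin K}

/-- The non-member decodability statement at step `i`. -/
def NMP (N K r t : ℕ) (d : Fin K → Fin N) (u : ℕ → Fin K) (i : ℕ) : Prop :=
  ∀ (k : Fin K) (V : Finset (Fin K)) (S : Finset (Fin N)),
    V.card = t → k ∉ V → (∀ i' ∈ Finset.Icc 1 (i-1), u i' ∉ V) → u i ∉ V →
    (∀ i' ∈ Finset.Icc 1 i, k ≠ u i') → S.card = r → d k ∈ S → d (u i) ∈ S →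
    d k ≠ d (u i) → S ∩ leaderDems d u i ⊆ {d (u i)} → 1 ≤ i → i ≤ numDistinct d →
    subBlk N K S V ∈ directDec d u r t k i

lemma aligned_shape {z : Fin N} {Q X : Finset (Fin N)} (hr1 : 1 ≤ r)
    (hQr : Q.card = r) (hXr : X.card = r) (hzQ : z ∈ Q) (hzX : z ∉ X)
    (hcard : (X ∩ Q).card = r - 1) :
    ∃ y, y ∉ Q ∧ X = insert y (Q.erase z) := by
  have hsub : X ∩ Q ⊆ Q.erase z := by
    intro x hx
    rw [Finset.mem_inter] at hx
    exact Finset.mem_erase.mpr ⟨fun h => hzX (h ▸ hx.1), hx.2⟩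
  have hXQ : X ∩ Q = Q.erase z :=
    Finset.eq_of_subset_of_card_le hsub (by rw [Finset.card_erase_of_mem hzQ, hQr, hcard])
  have hXdiff : (X \ Q).card = 1 := by
    have h := Finset.card_inter_add_card_sdiff X Q
    rw [hXr, hcard] at h
    omega
  obtain ⟨y, hy⟩ := Finset.card_eq_one.mp hXdiff
  have hyX : y ∈ X \ Q := hy ▸ Finset.mem_singleton_self y
  refine ⟨y, (Finset.mem_sdiff.mp hyX).2, ?_⟩
  ext x
  rw [Finset.mem_insert]
  constructor
  · intro hxX
    by_cases hxQ : x ∈ Q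
    · exact Or.inr (hXQ ▸ Finset.mem_inter.mpr ⟨hxX, hxQ⟩)
    · have : x ∈ X \ Q := Finset.mem_sdiff.mpr ⟨hxX, hxQ⟩
      rw [hy] at this
      exact Or.inl (Finset.mem_singleton.mp this)
  · rintro (rfl | hx)
    · exact (Finset.mem_sdiff.mp hyX).1
    · rw [← hXQ] at hx
      exact (Finset.mem_inter.mp hx).1

lemma resolveX {k : Fin K} {i : ℕ}
    (ih : ∀ i' < i, NMP N K r t d u i') (hi1 : 1 ≤ i) (hiN : i ≤ numDistinct d)
    {J₃ : Finset (Fin K)} (hJc₃ : J₃.card = t + 1) (hJu₃ : u i ∈ J₃)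
    (hJav₃ : ∀ i' ∈ Finset.Icc 1 (i-1), u i' ∉ J₃) (hk₃ : k ∈ J₃)
    (hkav : ∀ i' ∈ Finset.Icc 1 (i-1), k ≠ u i')
    {X : Finset (Fin N)} (hXr : X.card = r) (hfX : d k ∈ X) (hzX : d (u i) ∉ X)
    {y : Fin N} (hXL : X ∩ leaderDems d u i ⊆ {y}) (hfy : d k ≠ y) :
    subBlk N K X (J₃.erase k) ∈ directDec d u r t k i := by
  by_cases hyv : y ∈ X ∧ y ∈ leaderDems d u i
  · obtain ⟨i'', ⟨hi''1, hi''i⟩, hyi''⟩ := mem_leaderDems.mp hyv.2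
    have hyne : y ≠ d (u i) := fun h => hzX (h ▸ hyv.1)
    have hi''lt : i'' < i := by
      rcases Nat.lt_or_ge i'' i with h | h
      · exact h
      · exact absurd hyi'' (by rw [Nat.le_antisymm hi''i h]; exact fun h' => hyne h'.symm)
    have hdec : subBlk N K X (J₃.erase k) ∈ directDec d u r t k i'' := by
      refine ih i'' hi''lt k (J₃.erase k) X ?_ (Finset.notMem_erase k J₃) ?_ ?_ ?_ hXr hfX
        (hyi'' ▸ hyv.1) (hyi'' ▸ hfy) ?_ hi''1 (le_trans (le_of_lt hi''lt) (le_trans ?_ hiN))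
      · rw [Finset.card_erase_of_mem hk₃, hJc₃]; omega
      · intro i' hi'
        rw [Finset.mem_Icc] at hi'
        exact fun h => hJav₃ i' (Finset.mem_Icc.mpr ⟨hi'.1, by omega⟩) (Finset.mem_of_mem_erase h)
      · intro h
        exact hJav₃ i'' (Finset.mem_Icc.mpr ⟨hi''1, by omega⟩) (Finset.mem_of_mem_erase h)
      · intro i' hi'
        rw [Finset.mem_Icc] at hi'
        exact hkav i' (Finset.mem_Icc.mpr ⟨hi'.1, by omega⟩)
      · intro x hx
        rw [Finset.mem_inter] at hx
        have : x ∈ X ∩ leaderDems d u i :=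
          Finset.mem_inter.mpr ⟨hx.1, leaderDems_mono (le_of_lt hi''lt) hx.2⟩
        rw [hyi'']
        exact hXL this
      · exact le_rfl
    exact directDec_mono (le_of_lt hi''lt) hdec
  · refine A1 hi1 hJc₃ hJu₃ hJav₃ hk₃ hXr hfX hzX ?_
    intro x hx
    have hxy : x = y := Finset.mem_singleton.mp (hXL hx)
    rw [Finset.mem_inter] at hx
    exact absurd ⟨hxy ▸ hx.1, hxy ▸ hx.2⟩ hyv

lemma A3 {k : Fin K} {i : ℕ}
    (ih : ∀ i' < i, NMP N K r t d u i') (hi1 : 1 ≤ i) (hiN : i ≤ numDistinct d)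
    {J : Finset (Fin K)} (hJc : J.card = t + 1) (hJu : u i ∈ J)
    (hJav : ∀ i' ∈ Finset.Icc 1 (i-1), u i' ∉ J) (hk : k ∈ J)
    (hkav : ∀ i' ∈ Finset.Icc 1 (i-1), k ≠ u i')
    {Q : Finset (Fin N)} (hQr : Q.card = r) (hfQ : d k ∈ Q) (hzQ : d (u i) ∈ Q)
    (hfz : d k ≠ d (u i)) (hQL : Q ∩ leaderDems d u i ⊆ {d (u i)}) :
    subBlk N K Q (J.erase k) ∈ directDec d u r t k i := by
  classical
  have hr1 : 1 ≤ r := hQr ▸ Finset.card_pos.mpr ⟨d k, hfQ⟩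
  set Bs := Q \ J.image d with hBs
  have hQg : Q ∈ groupG d u r i J Bs :=
    mem_groupG.mpr ⟨hQr, ⟨d (u i), Finset.mem_inter.mpr ⟨hzQ, Finset.mem_image_of_mem d hJu⟩⟩,
      (Finset.card_le_card hQL).trans (by simp), rfl⟩
  have hcomb : comb d u r i J Bs Q ∈ transmitted d u r t i :=
    ⟨i, Finset.mem_Icc.mpr ⟨hi1, le_rfl⟩, J, hJc, hJu, hJav, Bs, Q, hQg, hzQ, rfl⟩
  have h0 : comb d u r i J Bs Q (Q, J.erase k) ≠ 0 :=
    comb_apply_target hzQ (Or.inl rfl) hk hfQ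
  refine extract_dec k i _ hcomb Q (J.erase k) hfQ h0 ?_
  rintro ⟨X, Vp⟩ hp hne
  obtain ⟨hX, k1, hk1J, hdk1, hVk1⟩ := comb_apply_ne_zero hne
  by_cases hk1k : k1 = k
  · rw [hk1k] at hdk1 hVk1
    rcases hX with rfl | hXfil
    · exact absurd (by rw [← hVk1]) hp
    · obtain ⟨hXg, hzX, hXQcard⟩ := Finset.mem_filter.mp hXfil
      obtain ⟨y, hyQ, hXeq⟩ :=
        aligned_shape hr1 hQr (groupG_card hXg) hzQ hzX hXQcard
      have hXL : X ∩ leaderDems d u i ⊆ {y} := by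
        intro x hx
        rw [Finset.mem_inter] at hx
        rw [hXeq] at hx
        rcases Finset.mem_insert.mp hx.1 with rfl | hxe
        · exact Finset.mem_singleton_self _
        · have : x ∈ Q ∩ leaderDems d u i :=
            Finset.mem_inter.mpr ⟨Finset.mem_of_mem_erase hxe, hx.2⟩
          have hxz : x = d (u i) := Finset.mem_singleton.mp (hQL this)
          exact absurd hxz (Finset.mem_erase.mp hxe).1
      have hfy : d k ≠ y := fun h => hyQ (h ▸ hfQ)
      rw [← hVk1]
      exact resolveX ih hi1 hiN hJc hJu hJav hk hkav (groupG_card hXg) hdk1 hzX hXL hfy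
  · have hkV : k ∈ J.erase k1 := Finset.mem_erase.mpr ⟨fun h => hk1k h.symm, hk⟩
    have hXr : X.card = r := by
      rcases hX with rfl | hXfil
      · exact hQr
      · exact groupG_card (Finset.mem_filter.mp hXfil).1
    have hVt : (J.erase k1).card = t := by
      rw [Finset.card_erase_of_mem hk1J, hJc]; omega
    rw [← hVk1]
    exact cached_mem hXr hVt hkV

end MainInd
section NMsec

variable {N K r t : ℕ} {d : Fin K → Fin N} {u : ℕ → Fin K}

lemma NM (hLd : ∀ i ∈ Finset.Icc 1 (numDistinct d), ∀ i' ∈ Finset.Icc 1 (numDistinct d),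
      i ≠ i' → d (u i) ≠ d (u i')) : ∀ i, NMP N K r t d u i := by
  intro i
  induction i using Nat.strong_induction_on with
  | _ i ih =>
    intro k V S hV hkV hVav huiV hkav hS hfS hzS hfz hSL hi1 hiN
    classical
    have hr1 : 1 ≤ r := hS ▸ Finset.card_pos.mpr ⟨d k, hfS⟩
    have hkui : k ≠ u i := hkav i (Finset.mem_Icc.mpr ⟨hi1, le_rfl⟩)
    set J'' := insert (u i) V with hJ''
    have hkJ'' : k ∉ J'' := by
      rw [hJ'', Finset.mem_insert]
      rintro (h | h)
      · exact hkui h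
      · exact hkV h
    have hJ''c : J''.card = t + 1 := by
      rw [hJ'', Finset.card_insert_of_notMem huiV, hV]
    have huiJ'' : u i ∈ J'' := Finset.mem_insert_self _ _
    have hJ''av : ∀ i' ∈ Finset.Icc 1 (i-1), u i' ∉ J'' := by
      intro i' hi'
      rw [Finset.mem_Icc] at hi'
      rw [hJ'', Finset.mem_insert]
      rintro (h | h)
      · have : d (u i') ≠ d (u i) := hLd i' (Finset.mem_Icc.mpr ⟨hi'.1, by omega⟩) i
          (Finset.mem_Icc.mpr ⟨hi1, hiN⟩) (by omega)
        exact this (congrArg d h)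
      · exact hVav i' (Finset.mem_Icc.mpr hi') h
    set Bs := S \ J''.image d with hBs
    have hSg : S ∈ groupG d u r i J'' Bs :=
      mem_groupG.mpr ⟨hS, ⟨d (u i), Finset.mem_inter.mpr
        ⟨hzS, Finset.mem_image_of_mem d huiJ''⟩⟩,
        (Finset.card_le_card hSL).trans (by simp), rfl⟩
    have hcomb : comb d u r i J'' Bs S ∈ transmitted d u r t i :=
      ⟨i, Finset.mem_Icc.mpr ⟨hi1, le_rfl⟩, J'', hJ''c, huiJ'', hJ''av, Bs, S, hSg, hzS, rfl⟩
    have hVeq : J''.erase (u i) = V := by rw [hJ'']; exact Finset.erase_insert huiV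
    have h0 : comb d u r i J'' Bs S (S, V) ≠ 0 := by
      rw [← hVeq]
      exact comb_apply_target hzS (Or.inl rfl) huiJ'' hzS
    refine extract_dec k i _ hcomb S V hfS h0 ?_
    rintro ⟨X, Vp⟩ hp hne
    obtain ⟨hX, k1, hk1J, hdk1, hVk1⟩ := comb_apply_ne_zero hne
    rcases Finset.mem_insert.mp hk1J with rfl | hk1V
    · -- k1 = u i
      rcases hX with rfl | hXfil
      · exact absurd (by rw [← hVk1, hVeq]) hp
      · exact absurd hdk1 (Finset.mem_filter.mp hXfil).2.1
    · -- k1 ∈ V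
      have hk1ui : k1 ≠ u i := fun h => huiV (h ▸ hk1V)
      have hkJe : k ∉ J''.erase k1 := fun h => hkJ'' (Finset.mem_of_mem_erase h)
      set J₃ := insert k (J''.erase k1) with hJ₃
      have hJ₃c : J₃.card = t + 1 := by
        rw [hJ₃, Finset.card_insert_of_notMem hkJe, Finset.card_erase_of_mem hk1J, hJ''c]
        omega
      have hJ₃u : u i ∈ J₃ := Finset.mem_insert_of_mem
        (Finset.mem_erase.mpr ⟨fun h => hk1ui h.symm, huiJ''⟩)
      have hJ₃av : ∀ i' ∈ Finset.Icc 1 (i-1), u i' ∉ J₃ := by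
        intro i' hi'
        rw [hJ₃, Finset.mem_insert]
        rintro (h | h)
        · exact hkav i' (Finset.mem_Icc.mpr ⟨(Finset.mem_Icc.mp hi').1,
            by have := (Finset.mem_Icc.mp hi').2; omega⟩) h.symm
        · exact hJ''av i' hi' (Finset.mem_of_mem_erase h)
      have hkJ₃ : k ∈ J₃ := Finset.mem_insert_self _ _
      have hkavm : ∀ i' ∈ Finset.Icc 1 (i-1), k ≠ u i' := by
        intro i' hi'
        rw [Finset.mem_Icc] at hi'
        exact hkav i' (Finset.mem_Icc.mpr ⟨hi'.1, by omega⟩)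
      have hJ₃e : J₃.erase k = J''.erase k1 := by
        rw [hJ₃]; exact Finset.erase_insert hkJe
      rw [← hVk1, ← hJ₃e]
      rcases hX with rfl | hXfil
      · exact A3 ih hi1 hiN hJ₃c hJ₃u hJ₃av hkJ₃ hkavm hS hfS hzS hfz hSL
      · obtain ⟨hXg, hzX, hXScard⟩ := Finset.mem_filter.mp hXfil
        obtain ⟨y, hyS, hXeq⟩ :=
          aligned_shape hr1 hS (groupG_card hXg) hzS hzX hXScard
        have hfX : d k ∈ X := by
          rw [hXeq]
          exact Finset.mem_insert_of_mem (Finset.mem_erase.mpr ⟨hfz, hfS⟩)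
        have hXL : X ∩ leaderDems d u i ⊆ {y} := by
          intro x hx
          rw [Finset.mem_inter] at hx
          rw [hXeq] at hx
          rcases Finset.mem_insert.mp hx.1 with rfl | hxe
          · exact Finset.mem_singleton_self _
          · have : x ∈ S ∩ leaderDems d u i :=
              Finset.mem_inter.mpr ⟨Finset.mem_of_mem_erase hxe, hx.2⟩
            exact absurd (Finset.mem_singleton.mp (hSL this)) (Finset.mem_erase.mp hxe).1
        have hfy : d k ≠ y := fun h => hyS (h ▸ hfS)
        exact resolveX ih hi1 hiN hJ₃c hJ₃u hJ₃av hkJ₃ hkavm (groupG_card hXg) hfX hzX hXL hfy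

end NMsec
section TopLevel

variable {N K r t : ℕ} {d : Fin K → Fin N} {u : ℕ → Fin K}

lemma inter_subset_singleton {α : Type*} [DecidableEq α] {s : Finset α} {a : α}
    (h1 : s.card ≤ 1) (ha : a ∈ s) : s ⊆ {a} := fun x hx =>
  Finset.mem_singleton.mpr (Finset.card_le_one.mp h1 x hx a ha)

lemma TA1span {j : ℕ} {J : Finset (Fin K)} {B : Finset (Fin N)} {k : Fin K}
    (hJc : J.card = t + 1) (hJu : u j ∈ J) (hk : k ∈ J)
    {X : Finset (Fin N)} (hXg : X ∈ groupG d u r j J B) (hfX : d k ∈ X)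
    (hzX : d (u j) ∉ X) (hXL : X ∩ leaderDems d u j ⊆ {d k}) :
    subBlk N K X (J.erase k) ∈ Submodule.span (ZMod 2)
      (directDec d u r t k (j-1) ∪
        {v | ∃ P ∈ groupG d u r j J B, d (u j) ∈ P ∧ v = comb d u r j J B P}) := by
  classical
  set SP := Submodule.span (ZMod 2)
      (directDec d u r t k (j-1) ∪
        {v | ∃ P ∈ groupG d u r j J B, d (u j) ∈ P ∧ v = comb d u r j J B P}) with hSP
  have hXr : X.card = r := groupG_card hXg
  have hXB : X \ J.image d = B := (mem_groupG.mp hXg).2.2.2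
  set P' := insert (d (u j)) (X.erase (d k)) with hP'
  have hzXe : d (u j) ∉ X.erase (d k) := fun h => hzX (Finset.mem_of_mem_erase h)
  have hP'card : P'.card = r := by
    have hr1 : 1 ≤ r := hXr ▸ Finset.card_pos.mpr ⟨d k, hfX⟩
    rw [hP', Finset.card_insert_of_notMem hzXe, Finset.card_erase_of_mem hfX, hXr]
    omega
  have hdujIm : d (u j) ∈ J.image d := Finset.mem_image_of_mem d hJu
  have hdkIm : d k ∈ J.image d := Finset.mem_image_of_mem d hk
  have hsd : X \ J.image d = P' \ J.image d := by
    ext x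
    simp only [Finset.mem_sdiff, hP', Finset.mem_insert, Finset.mem_erase]
    constructor
    · rintro ⟨hxX, hxim⟩
      exact ⟨Or.inr ⟨fun h => hxim (h ▸ hdkIm), hxX⟩, hxim⟩
    · rintro ⟨h1, hxim⟩
      rcases h1 with rfl | ⟨-, hxX⟩
      · exact absurd hdujIm hxim
      · exact ⟨hxX, hxim⟩
  have hP'L : P' ∩ leaderDems d u j ⊆ {d (u j)} := by
    intro x hx
    rw [Finset.mem_inter] at hx
    rcases Finset.mem_insert.mp hx.1 with rfl | hxe
    · exact Finset.mem_singleton_self _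
    · obtain ⟨hxdk, hxX⟩ := Finset.mem_erase.mp hxe
      exact absurd (Finset.mem_singleton.mp (hXL (Finset.mem_inter.mpr ⟨hxX, hx.2⟩))) hxdk
  have hP'g : P' ∈ groupG d u r j J B :=
    mem_groupG.mpr ⟨hP'card,
      ⟨d (u j), Finset.mem_inter.mpr ⟨Finset.mem_insert_self _ _, hdujIm⟩⟩,
      (Finset.card_le_card hP'L).trans (by simp), by rw [← hsd]; exact hXB⟩
  have hXP'int : X ∩ P' = X.erase (d k) := by
    ext x
    simp only [Finset.mem_inter, hP', Finset.mem_insert, Finset.mem_erase]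
    constructor
    · rintro ⟨hxX, h⟩
      rcases h with rfl | h
      · exact absurd hxX hzX
      · exact h
    · rintro ⟨hxdk, hxX⟩
      exact ⟨hxX, Or.inr ⟨hxdk, hxX⟩⟩
  have hXfil : X ∈ alignedF d u r j J B P' :=
    Finset.mem_filter.mpr ⟨hXg, hzX, by rw [hXP'int, Finset.card_erase_of_mem hfX, hXr]⟩
  have hc : comb d u r j J B P' ∈ SP :=
    Submodule.subset_span (Or.inr ⟨P', hP'g, Finset.mem_insert_self _ _, rfl⟩)
  have h0 : comb d u r j J B P' (X, J.erase k) ≠ 0 :=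
    comb_apply_target (Finset.mem_insert_self _ _) (Or.inr hXfil) hk hfX
  refine key_extract_span SP _ hc X (J.erase k) h0 ?_
  rintro ⟨X', Vp⟩ hp hne
  obtain ⟨hX', k1, hk1J, hdk1, hVk1⟩ := comb_apply_ne_zero hne
  by_cases hk1k : k1 = k
  · rw [hk1k] at hdk1 hVk1
    exfalso
    rcases hX' with rfl | hX'fil
    · rcases Finset.mem_insert.mp hdk1 with h | h
      · exact hzX (h ▸ hfX)
      · exact (Finset.mem_erase.mp h).1 rfl
    · obtain ⟨hX'g, hzX', hX'Pcard⟩ := Finset.mem_filter.mp hX'fil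
      have hX'card : X'.card = r := groupG_card hX'g
      have hsub : X' ∩ P' ⊆ P'.erase (d (u j)) := by
        intro x hx
        rw [Finset.mem_inter] at hx
        exact Finset.mem_erase.mpr ⟨fun h => hzX' (h ▸ hx.1), hx.2⟩
      have hPe : P'.erase (d (u j)) = X.erase (d k) := Finset.erase_insert hzXe
      have hXP : X' ∩ P' = P'.erase (d (u j)) :=
        Finset.eq_of_subset_of_card_le hsub
          (by rw [hPe, Finset.card_erase_of_mem hfX, hXr, hX'Pcard])
      have hXsub : X ⊆ X' := by
        intro x hxX
        by_cases hxdk : x = d k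
        · exact hxdk ▸ hdk1
        · have : x ∈ X' ∩ P' := by
            rw [hXP, hPe]
            exact Finset.mem_erase.mpr ⟨hxdk, hxX⟩
          exact (Finset.mem_inter.mp this).1
      have hXX : X = X' := Finset.eq_of_subset_of_card_le hXsub (by rw [hX'card, hXr])
      exact hp (by rw [← hXX, ← hVk1])
  · have hkV : k ∈ J.erase k1 := Finset.mem_erase.mpr ⟨fun h => hk1k h.symm, hk⟩
    have hX'r : X'.card = r := by
      rcases hX' with rfl | hX'fil
      · exact hP'card
      · exact groupG_card (Finset.mem_filter.mp hX'fil).1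
    have hVt : (J.erase k1).card = t := by
      rw [Finset.card_erase_of_mem hk1J, hJc]; omega
    rw [← hVk1]
    exact Submodule.subset_span (Or.inl (cached_mem hX'r hVt hkV))

end TopLevel
section TopLevel2

variable {N K r t : ℕ} {d : Fin K → Fin N} {u : ℕ → Fin K}

lemma NM_to_span {j : ℕ} {J : Finset (Fin K)} {k : Fin K}
    (hLd : ∀ i ∈ Finset.Icc 1 (numDistinct d), ∀ i' ∈ Finset.Icc 1 (numDistinct d),
      i ≠ i' → d (u i) ≠ d (u i'))
    (hj1 : 1 ≤ j) (hjN : j ≤ numDistinct d)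
    (hJc : J.card = t + 1) (hJu : u j ∈ J)
    (hJav : ∀ i' ∈ Finset.Icc 1 (j-1), u i' ∉ J) (hk : k ∈ J)
    {X : Finset (Fin N)} (hXr : X.card = r) (hfX : d k ∈ X)
    {y : Fin N} (hyX : y ∈ X) (hyL : y ∈ leaderDems d u j) (hyduj : y ≠ d (u j))
    (hfy : d k ≠ y) (hXL : X ∩ leaderDems d u j ⊆ {y}) :
    subBlk N K X (J.erase k) ∈ directDec d u r t k (j-1) := by
  obtain ⟨i'', ⟨hi''1, hi''j⟩, hyi''⟩ := mem_leaderDems.mp hyL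
  have hi''lt : i'' < j := by
    rcases Nat.lt_or_ge i'' j with h | h
    · exact h
    · exact absurd hyi'' (by rw [Nat.le_antisymm hi''j h]; exact fun h' => hyduj h'.symm)
  have hkav : ∀ i' ∈ Finset.Icc 1 i'', k ≠ u i' := by
    intro i' hi'
    rw [Finset.mem_Icc] at hi'
    exact fun h => hJav i' (Finset.mem_Icc.mpr ⟨hi'.1, by omega⟩) (h ▸ hk)
  have hdec : subBlk N K X (J.erase k) ∈ directDec d u r t k i'' := by
    refine NM hLd i'' k (J.erase k) X ?_ (Finset.notMem_erase k J) ?_ ?_ hkav hXr hfX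
      (hyi'' ▸ hyX) (hyi'' ▸ hfy) ?_ hi''1 (by omega)
    · rw [Finset.card_erase_of_mem hk, hJc]; omega
    · intro i' hi'
      rw [Finset.mem_Icc] at hi'
      exact fun h => hJav i' (Finset.mem_Icc.mpr ⟨hi'.1, by omega⟩) (Finset.mem_of_mem_erase h)
    · intro h
      exact hJav i'' (Finset.mem_Icc.mpr ⟨hi''1, by omega⟩) (Finset.mem_of_mem_erase h)
    · intro x hx
      rw [Finset.mem_inter] at hx
      rw [hyi'']
      exact hXL (Finset.mem_inter.mpr ⟨hx.1, leaderDems_mono (by omega) hx.2⟩)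
  exact directDec_mono (by omega) hdec

lemma TA3span {j : ℕ} {J : Finset (Fin K)} {B : Finset (Fin N)} {k : Fin K}
    (hLd : ∀ i ∈ Finset.Icc 1 (numDistinct d), ∀ i' ∈ Finset.Icc 1 (numDistinct d),
      i ≠ i' → d (u i) ≠ d (u i'))
    (hj1 : 1 ≤ j) (hjN : j ≤ numDistinct d)
    (hJc : J.card = t + 1) (hJu : u j ∈ J)
    (hJav : ∀ i' ∈ Finset.Icc 1 (j-1), u i' ∉ J) (hk : k ∈ J)
    {Q : Finset (Fin N)} (hQg : Q ∈ groupG d u r j J B) (hfQ : d k ∈ Q)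
    (hzQ : d (u j) ∈ Q) (hfz : d k ≠ d (u j)) :
    subBlk N K Q (J.erase k) ∈ Submodule.span (ZMod 2)
      (directDec d u r t k (j-1) ∪
        {v | ∃ P ∈ groupG d u r j J B, d (u j) ∈ P ∧ v = comb d u r j J B P}) := by
  classical
  have hQr : Q.card = r := groupG_card hQg
  have hr1 : 1 ≤ r := hQr ▸ Finset.card_pos.mpr ⟨d k, hfQ⟩
  have hQL : Q ∩ leaderDems d u j ⊆ {d (u j)} :=
    inter_subset_singleton (mem_groupG.mp hQg).2.2.1
      (Finset.mem_inter.mpr ⟨hzQ, self_mem_leaderDems hj1⟩)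
  have hc : comb d u r j J B Q ∈ Submodule.span (ZMod 2)
      (directDec d u r t k (j-1) ∪
        {v | ∃ P ∈ groupG d u r j J B, d (u j) ∈ P ∧ v = comb d u r j J B P}) :=
    Submodule.subset_span (Or.inr ⟨Q, hQg, hzQ, rfl⟩)
  have h0 : comb d u r j J B Q (Q, J.erase k) ≠ 0 :=
    comb_apply_target hzQ (Or.inl rfl) hk hfQ
  refine key_extract_span _ _ hc Q (J.erase k) h0 ?_
  rintro ⟨X, Vp⟩ hp hne
  obtain ⟨hX, k1, hk1J, hdk1, hVk1⟩ := comb_apply_ne_zero hne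
  by_cases hk1k : k1 = k
  · rw [hk1k] at hdk1 hVk1
    rcases hX with rfl | hXfil
    · exact absurd (by rw [← hVk1]) hp
    · obtain ⟨hXg, hzX, hXQcard⟩ := Finset.mem_filter.mp hXfil
      obtain ⟨y, hyQ, hXeq⟩ := aligned_shape hr1 hQr (groupG_card hXg) hzQ hzX hXQcard
      have hyX : y ∈ X := by rw [hXeq]; exact Finset.mem_insert_self _ _
      have hXL : X ∩ leaderDems d u j ⊆ {y} := by
        intro x hx
        rw [Finset.mem_inter] at hx
        rw [hXeq] at hx
        rcases Finset.mem_insert.mp hx.1 with rfl | hxe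
        · exact Finset.mem_singleton_self _
        · exact absurd (Finset.mem_singleton.mp
            (hQL (Finset.mem_inter.mpr ⟨Finset.mem_of_mem_erase hxe, hx.2⟩)))
            (Finset.mem_erase.mp hxe).1
      have hfy : d k ≠ y := fun h => hyQ (h ▸ hfQ)
      rw [← hVk1]
      by_cases hyL : y ∈ leaderDems d u j
      · have hyduj : y ≠ d (u j) := fun h => hyQ (h ▸ hzQ)
        exact Submodule.subset_span (Or.inl (NM_to_span hLd hj1 hjN hJc hJu hJav hk
          (groupG_card hXg) hdk1 hyX hyL hyduj hfy hXL))
      · refine TA1span hJc hJu hk hXg hdk1 hzX ?_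
        intro x hx
        exact absurd ((Finset.mem_singleton.mp (hXL hx)) ▸ (Finset.mem_inter.mp hx).2) hyL
  · have hkV : k ∈ J.erase k1 := Finset.mem_erase.mpr ⟨fun h => hk1k h.symm, hk⟩
    have hXr : X.card = r := by
      rcases hX with rfl | hXfil
      · exact hQr
      · exact groupG_card (Finset.mem_filter.mp hXfil).1
    have hVt : (J.erase k1).card = t := by
      rw [Finset.card_erase_of_mem hk1J, hJc]; omega
    rw [← hVk1]
    exact Submodule.subset_span (Or.inl (cached_mem hXr hVt hkV))

end TopLevel2
theorem statement8 (N K r t : ℕ) (hN : 1 ≤ N) (hK : 1 ≤ K) (hr : 1 ≤ r) (hrN : r ≤ N)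
    (htK : t ≤ K)
    (d : Fin K → Fin N) (u : ℕ → Fin K)
    (hLdistinct : ∀ i ∈ Finset.Icc 1 (numDistinct d), ∀ i' ∈ Finset.Icc 1 (numDistinct d),
      i ≠ i' → d (u i) ≠ d (u i'))
    (hLcover : ∀ k : Fin K, ∃ i ∈ Finset.Icc 1 (numDistinct d), d (u i) = d k)
    -- a step `j` of the scheme and an admissible user set `J`
    (j : ℕ) (hj : j ∈ Finset.Icc 1 (min (N - r + 1) (min (K - t) (numDistinct d))))
    (J : Finset (Fin K)) (hJcard : J.card = t + 1) (hJu : u j ∈ J)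
    (hJav : ∀ i ∈ Finset.Icc 1 (j - 1), u i ∉ J)
    (B : Finset (Fin N))
    (k : Fin K) (hkJ : k ∈ J)
    -- a sub-block appearing in the linear combinations for the group `G^j_{J,B}`
    (S : Finset (Fin N)) (V : Finset (Fin K))
    (happ : ∃ P ∈ groupG d u r j J B, d (u j) ∈ P ∧ comb d u r j J B P (S, V) ≠ 0)
    -- that user `k` has neither cached nor decoded previously
    (hnew : subBlk N K S V ∉ directDec d u r t k (j - 1)) :
    -- is recoverable from the group's combinations together with the cached and
    -- previously directly decoded sub-blocks
    subBlk N K S V ∈ Submodule.span (ZMod 2)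
      (directDec d u r t k (j - 1) ∪
        { v | ∃ P ∈ groupG d u r j J B, d (u j) ∈ P ∧ v = comb d u r j J B P }) := by
  classical
  rw [Finset.mem_Icc] at hj
  have hj1 : 1 ≤ j := hj.1
  have hjN : j ≤ numDistinct d :=
    le_trans hj.2 (le_trans (min_le_right _ _) (min_le_right _ _))
  obtain ⟨P₀, hP₀g, hP₀u, h0⟩ := happ
  obtain ⟨hX, k1, hk1J, hdk1, hVk1⟩ := comb_apply_ne_zero h0
  have hSr : S.card = r := by
    rcases hX with rfl | hSfil
    · exact groupG_card hP₀g
    · exact groupG_card (Finset.mem_filter.mp hSfil).1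
  by_cases hk1k : k1 = k
  · rw [hk1k] at hdk1 hVk1
    subst hVk1
    by_cases hzS : d (u j) ∈ S
    · -- S is the pilot P₀
      have hSP₀ : S = P₀ := by
        rcases hX with rfl | hSfil
        · rfl
        · exact absurd hzS (Finset.mem_filter.mp hSfil).2.1
      have hSg : S ∈ groupG d u r j J B := hSP₀ ▸ hP₀g
      by_cases hfduj : d k = d (u j)
      · -- the user demands the leader file: decode directly from comb P₀
        have hc : comb d u r j J B P₀ ∈ Submodule.span (ZMod 2)
            (directDec d u r t k (j-1) ∪
              {v | ∃ P ∈ groupG d u r j J B, d (u j) ∈ P ∧ v = comb d u r j J B P}) :=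
          Submodule.subset_span (Or.inr ⟨P₀, hP₀g, hP₀u, rfl⟩)
        refine key_extract_span _ _ hc S (J.erase k) h0 ?_
        rintro ⟨X', Vp⟩ hp hne
        obtain ⟨hX', k1', hk1'J, hdk1', hVk1'⟩ := comb_apply_ne_zero hne
        by_cases hk1'k : k1' = k
        · rw [hk1'k] at hdk1' hVk1'
          exfalso
          rcases hX' with rfl | hX'fil
          · exact hp (by rw [← hVk1', hSP₀])
          · exact (Finset.mem_filter.mp hX'fil).2.1 (hfduj ▸ hdk1')
        · have hkV : k ∈ J.erase k1' := Finset.mem_erase.mpr ⟨fun h => hk1'k h.symm, hkJ⟩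
          have hX'r : X'.card = r := by
            rcases hX' with rfl | hX'fil
            · exact groupG_card hP₀g
            · exact groupG_card (Finset.mem_filter.mp hX'fil).1
          have hVt : (J.erase k1').card = t := by
            rw [Finset.card_erase_of_mem hk1'J, hJcard]; omega
          rw [← hVk1']
          exact Submodule.subset_span (Or.inl (cached_mem hX'r hVt hkV))
      · exact TA3span hLdistinct hj1 hjN hJcard hJu hJav hkJ hSg hdk1 hzS hfduj
    · -- S is an aligned (non-pilot) block
      have hSg : S ∈ groupG d u r j J B := by
        rcases hX with rfl | hSfil
        · exact absurd hP₀u hzS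
        · exact (Finset.mem_filter.mp hSfil).1
      have hcard1 : (S ∩ leaderDems d u j).card ≤ 1 := (mem_groupG.mp hSg).2.2.1
      by_cases hLsub : S ∩ leaderDems d u j ⊆ {d k}
      · exact TA1span hJcard hJu hkJ hSg hdk1 hzS hLsub
      · obtain ⟨y, hyin, hyne⟩ := Finset.not_subset.mp hLsub
        have hyne' : y ≠ d k := fun h => hyne (Finset.mem_singleton.mpr h)
        have hSL : S ∩ leaderDems d u j ⊆ {y} := inter_subset_singleton hcard1 hyin
        rw [Finset.mem_inter] at hyin
        have hyduj : y ≠ d (u j) := fun h => hzS (h ▸ hyin.1)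
        exact Submodule.subset_span (Or.inl (NM_to_span hLdistinct hj1 hjN hJcard hJu hJav
          hkJ hSr hdk1 hyin.1 hyin.2 hyduj (fun h => hyne' h.symm) hSL))
  · have hkV : k ∈ J.erase k1 := Finset.mem_erase.mpr ⟨fun h => hk1k h.symm, hkJ⟩
    have hVt : (J.erase k1).card = t := by
      rw [Finset.card_erase_of_mem hk1J, hJcard]; omega
    rw [← hVk1]
    exact Submodule.subset_span (Or.inl (cached_mem hSr hVt hkV))
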